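/- Let f : 𝔽_{q^n} → 𝔽_{q^n} be a bijection with coordinate functions f_i(x) = Tr(v_i f(x)) with respect to a dual pair of ordered bases u_1,…,u_n and v_1,…,v_n of 𝔽_{q^n} over 𝔽_q, let m_1,…,m_n be positive integers, and let a_1,…,a_n ∈ 𝔽_{q^n}. Then the map F(x) = a_1 (f_1(x))^{m_1} + ⋯ + a_n (f_n(x))^{m_n} is a bijection of 𝔽_{q^n} if and only if (1) gcd(m_1 ⋯ m_n, q−1) = 1 and (2) a_1,…,a_n is a basis of 𝔽_{q^n} over 𝔽_q. -/

import Mathlib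

/-!
With respect to the dual pair, `(f₁(x), …, fₙ(x))` is the coordinate vector of `f(x)` in the
basis `u`, so `F` factors as `f`, then the coordinate isomorphism, then the componentwise powers
`cᵢ ↦ cᵢ ^ mᵢ`, then `c ↦ ∑ cᵢ aᵢ`. The last map is onto only if the `aᵢ` span, hence (there are
`n = dim` of them) form a basis, and then it is bijective too. So `F` is bijective iff every
`x ↦ x ^ mᵢ` is a bijection of `𝔽_q`, i.e. of the group `𝔽_q^×` of order `q - 1`; by Cauchy's
theorem a common prime factor of `mᵢ` and `q - 1` yields a nontrivial `mᵢ`-th root of unity.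
-/

open Function

theorem Function.bijective_piMap_iff {ι : Type*} [DecidableEq ι] {α β : ι → Type*}
    [∀ i, Nonempty (α i)] {f : ∀ i, α i → β i} :
    Bijective (Pi.map f) ↔ ∀ i, Bijective (f i) := by
  refine ⟨fun hf i => ⟨fun x y hxy => ?_, fun y => ?_⟩, .piMap⟩
  · have hupdate : Pi.map f (update (fun j => Classical.arbitrary (α j)) i x) =
        Pi.map f (update (fun j => Classical.arbitrary (α j)) i y) := by
      funext j
      simp only [Pi.map_apply, apply_update f, hxy]
    simpa using congr_fun (hf.injective hupdate) i
  · obtain ⟨x, hx⟩ := hf.surjective (update (Pi.map f fun j => Classical.arbitrary (α j)) i y)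
    exact ⟨x i, by simpa using congr_fun hx i⟩

theorem Finite.pow_injective_iff_coprime_card {G : Type*} [Group G] [Finite G] {m : ℕ} :
    Injective (· ^ m : G → G) ↔ (Nat.card G).Coprime m := by
  refine ⟨fun hinj => ?_, fun h => h.pow_left_bijective.injective⟩
  by_contra hcop
  obtain ⟨p, hp, hpgcd⟩ := Nat.exists_prime_and_dvd hcop
  have := Fact.mk hp
  obtain ⟨g, hg⟩ := exists_prime_orderOf_dvd_card' p (hpgcd.trans (Nat.gcd_dvd_left _ _))
  have hgm : g ^ m = 1 ^ m := by
    rw [one_pow, ← orderOf_dvd_iff_pow_eq_one, hg]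
    exact hpgcd.trans (Nat.gcd_dvd_right _ _)
  have hg1 : orderOf g = 1 := by rw [hinj hgm, orderOf_one]
  exact hp.one_lt.ne' (hg ▸ hg1)

theorem pow_injective_iff_units {M₀ : Type*} [GroupWithZero M₀] {m : ℕ} (hm : m ≠ 0) :
    Injective (· ^ m : M₀ → M₀) ↔ Injective (· ^ m : M₀ˣ → M₀ˣ) := by
  refine ⟨fun h x y hxy => Units.ext (h (by simpa using congr_arg Units.val hxy)),
    fun h x y hxy => ?_⟩
  simp only at hxy
  rcases eq_or_ne x 0 with rfl | hx
  · rw [zero_pow hm, eq_comm, pow_eq_zero_iff hm] at hxy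
    exact hxy.symm
  have hy : y ≠ 0 := by
    rintro rfl
    rw [zero_pow hm, pow_eq_zero_iff hm] at hxy
    exact hx hxy
  have hunits : Units.mk0 x hx ^ m = Units.mk0 y hy ^ m := Units.ext (by simpa using hxy)
  simpa using congr_arg Units.val (h hunits)

theorem FiniteField.pow_bijective_iff_coprime {K : Type*} [Field K] [Fintype K] {m : ℕ}
    (hm : m ≠ 0) : Bijective (· ^ m : K → K) ↔ m.Coprime (Fintype.card K - 1) := by
  rw [← Finite.injective_iff_bijective, pow_injective_iff_units hm,
    Finite.pow_injective_iff_coprime_card, Nat.card_units, Nat.card_eq_fintype_card,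
    Nat.coprime_comm]

theorem bijective_fintypeLinearCombination_iff {R M ι : Type*} [Semiring R] [AddCommMonoid M]
    [Module R M] [Fintype ι] {v : ι → M} :
    Bijective (Fintype.linearCombination R v) ↔
      LinearIndependent R v ∧ Submodule.span R (Set.range v) = ⊤ := by
  rw [linearIndependent_iff_injective_fintypeLinearCombination,
    span_range_eq_top_iff_surjective_fintypeLinearCombination, Bijective]

theorem Module.Basis.trace_mul_eq_repr {K L ι : Type*} [CommRing K] [CommRing L] [Algebra K L]
    [DecidableEq ι] (b : Module.Basis ι K L) {v : ι → L}
    (hdual : ∀ i j, Algebra.trace K L (b i * v j) = if i = j then 1 else 0) (y : L) (i : ι) :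
    Algebra.trace K L (v i * y) = b.repr y i := by
  have : (Algebra.trace K L).comp (LinearMap.mulLeft K (v i)) = b.coord i :=
    b.ext fun j => by simp [Finsupp.single_apply, mul_comm (v i), hdual]
  exact LinearMap.congr_fun this y

theorem bijective_fintypeLinearCombination_comp_iff {K V ι α : Type*} [DivisionRing K]
    [AddCommGroup V] [Module K V] [Fintype ι] {v : ι → V}
    (hcard : Fintype.card ι = Module.finrank K V) {g : α → ι → K} :
    Bijective (Fintype.linearCombination K v ∘ g) ↔
      (LinearIndependent K v ∧ Submodule.span K (Set.range v) = ⊤) ∧ Bijective g := by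
  refine ⟨fun h => ?_, fun ⟨hv, hg⟩ => (bijective_fintypeLinearCombination_iff.2 hv).comp hg⟩
  have hspan : Submodule.span K (Set.range v) = ⊤ :=
    (span_range_eq_top_iff_surjective_fintypeLinearCombination K v).2 h.surjective.of_comp
  have hv : LinearIndependent K v ∧ Submodule.span K (Set.range v) = ⊤ :=
    ⟨linearIndependent_of_top_le_span_of_card_eq_finrank hspan.ge hcard, hspan⟩
  exact ⟨hv, (Bijective.of_comp_iff' (bijective_fintypeLinearCombination_iff.2 hv) g).1 h⟩

theorem stmt11_general {K L : Type*} [Field K] [Field L] [Algebra K L]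
    [Fintype K] [Fintype L] {n : ℕ}
    (hdim : Module.finrank K L = n)
    (u v : Fin n → L)
    (hbasisu : LinearIndependent K u ∧ Submodule.span K (Set.range u) = ⊤)
    (hdual : ∀ i j, Algebra.trace K L (u i * v j) = if i = j then 1 else 0)
    (f : L → L) (hf : Function.Bijective f)
    (m : Fin n → ℕ) (hm : ∀ i, 0 < m i) (a : Fin n → L) :
    Function.Bijective (fun x : L =>
        ∑ i, a i * algebraMap K L ((Algebra.trace K L (v i * f x)) ^ (m i))) ↔
      (Nat.gcd (∏ i, m i) (Fintype.card K - 1) = 1 ∧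
        (LinearIndependent K a ∧ Submodule.span K (Set.range a) = ⊤)) := by
  set b := Module.Basis.mk hbasisu.1 hbasisu.2.ge
  have hb : ∀ i j, Algebra.trace K L (b i * v j) = if i = j then 1 else 0 := by
    simpa [b] using hdual
  have hF : (fun x : L => ∑ i, a i * algebraMap K L ((Algebra.trace K L (v i * f x)) ^ (m i))) =
      Fintype.linearCombination K a ∘ Pi.map (fun i (c : K) => c ^ m i) ∘ b.equivFun ∘ f := by
    funext x
    simp [Fintype.linearCombination_apply, b.trace_mul_eq_repr hb, Algebra.smul_def, mul_comm]
  have hpow : ∀ i, Bijective (fun c : K => c ^ m i) ↔ (m i).Coprime (Fintype.card K - 1) :=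
    fun i => FiniteField.pow_bijective_iff_coprime (hm i).ne'
  rw [hF, ← comp_assoc, Bijective.of_comp_iff _ (b.equivFun.bijective.comp hf),
    bijective_fintypeLinearCombination_comp_iff (by simp [hdim]), bijective_piMap_iff,
    ← Nat.Coprime, Nat.coprime_prod_left_iff]
  simp only [hpow, Finset.mem_univ, true_implies, and_comm]

/-- With a dual pair of ordered bases `u, v` of `L = 𝔽_{q^n}` over
`K = 𝔽_q`, a bijection `f : L → L` with coordinate functions `fᵢ(x) = Tr(vᵢ f(x))`,
positive integers `mᵢ` and elements `aᵢ ∈ L`, the map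
`F(x) = ∑ aᵢ (fᵢ(x))^{mᵢ}` is a bijection of `L` iff `gcd(m₁⋯mₙ, q−1) = 1` and
`a₁,…,aₙ` is a basis of `L` over `K`. -/
theorem stmt11 {K L : Type*} [Field K] [Field L] [Algebra K L]
    [Fintype K] [Fintype L] {n : ℕ} (hn : 0 < n)
    (hdim : Module.finrank K L = n)
    (u v : Fin n → L)
    (hbasisu : LinearIndependent K u ∧ Submodule.span K (Set.range u) = ⊤)
    (hbasisv : LinearIndependent K v ∧ Submodule.span K (Set.range v) = ⊤)
    (hdual : ∀ i j, Algebra.trace K L (u i * v j) = if i = j then 1 else 0)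
    (f : L → L) (hf : Function.Bijective f)
    (m : Fin n → ℕ) (hm : ∀ i, 0 < m i) (a : Fin n → L) :
    Function.Bijective (fun x : L =>
        ∑ i, a i * algebraMap K L ((Algebra.trace K L (v i * f x)) ^ (m i))) ↔
      (Nat.gcd (∏ i, m i) (Fintype.card K - 1) = 1 ∧
        (LinearIndependent K a ∧ Submodule.span K (Set.range a) = ⊤)) :=
  stmt11_general hdim u v hbasisu hdual f hf m hm a
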